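/- arXiv:2505.23478 — 2 statements merged into one kernel-verified Lean document; each statement's English description precedes it below -/
import Mathlib

section
/- Let θ : (0,∞) → [0,∞) be measurable, d > 0, and assume 𝔍_θ(1) < ∞ and 𝔏^d_θ(1) < ∞. Then for every r > 0 one has r^d ∫_r^∞ 𝔍_θ(t)/t^{d+1} dt = (1/d)·(𝔍_θ(r) + 𝔏^d_θ(r)), where 𝔍_θ(r) = ∫_0^r θ(t)/t dt and 𝔏^d_θ(r) = r^d ∫_r^∞ θ(t)/t^{d+1} dt. -/
/-!
Swap the order of integration over the region `0 < s ≤ t`, `r < t` (Tonelli): the left side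
becomes `∫ θ(s)/s · (∫_{max(r,s)}^∞ t^{-d-1} dt) ds = ∫ θ(s)/s · max(r,s)^{-d}/d ds`, and
splitting at `s = r` gives the two terms. The computation is done for `ℝ≥0∞`-valued integrands,
where Tonelli needs no integrability; the Dini conditions make every Bochner integral involved
finite, so that it agrees with the corresponding lintegral.
-/

open MeasureTheory Set
open scoped ENNReal

theorem MeasureTheory.IntegrableOn.div_rpow_of_div_rpow {θ : ℝ → ℝ} {A : Set ℝ} {a b p q : ℝ}
    (h : IntegrableOn (fun s => θ s / s ^ q) A) (ha : 0 < a) (hA : MeasurableSet A)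
    (hAab : A ⊆ Icc a b) : IntegrableOn (fun s => θ s / s ^ p) A := by
  have hpos : ∀ s ∈ Icc a b, 0 < s := fun s hs => ha.trans_le hs.1
  have hcont : ContinuousOn (fun s : ℝ => s ^ (q - p)) (Icc a b) := fun s hs =>
    (Real.continuousAt_rpow_const _ _ (Or.inl (hpos s hs).ne')).continuousWithinAt
  refine (h.continuousOn_mul_of_subset hcont isCompact_Icc hA hAab).congr_fun
    (fun s hs => ?_) hA
  have hs := hpos s (hAab hs)
  simp only [Real.rpow_sub hs]
  field_simp

theorem lintegral_Ioi_inv_rpow {d s : ℝ} (hd : 0 < d) (hs : 0 < s) :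
    ∫⁻ t in Ioi s, ENNReal.ofReal (t ^ (d + 1))⁻¹ = ENNReal.ofReal (d * s ^ d)⁻¹ := by
  have hexp : -(d + 1) < -1 := by linarith
  rw [setLIntegral_congr_fun measurableSet_Ioi
      (fun t (ht : s < t) => by rw [← Real.rpow_neg (hs.trans ht).le]),
    ← ofReal_integral_eq_lintegral_ofReal (integrableOn_Ioi_rpow_of_lt hexp hs)
      (ae_restrict_of_forall_mem measurableSet_Ioi fun t ht =>
        Real.rpow_nonneg (hs.trans ht).le _),
    integral_Ioi_rpow_of_lt hexp hs, show -(d + 1) + 1 = -d by ring, Real.rpow_neg hs.le]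
  congr 1
  field_simp

theorem lintegral_Ioi_lintegral_Ioc_mul {μ : Measure ℝ} [SFinite μ] {f k : ℝ → ℝ≥0∞}
    (hf : Measurable f) (hk : Measurable k) (a : ℝ) :
    ∫⁻ t in Ioi a, (∫⁻ s in Ioc a t, f s ∂μ) * k t ∂μ =
      ∫⁻ s in Ioi a, f s * ∫⁻ t in Ici s, k t ∂μ ∂μ := by
  calc ∫⁻ t in Ioi a, (∫⁻ s in Ioc a t, f s ∂μ) * k t ∂μ
      = ∫⁻ t in Ioi a, ∫⁻ s in Ioi a, (Iic t).indicator f s * k t ∂μ ∂μ := by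
        refine setLIntegral_congr_fun measurableSet_Ioi fun t _ => ?_
        rw [lintegral_mul_const _ (hf.indicator measurableSet_Iic),
          lintegral_indicator measurableSet_Iic, Measure.restrict_restrict measurableSet_Iic,
          Iic_inter_Ioi]
    _ = ∫⁻ s in Ioi a, ∫⁻ t in Ioi a, (Iic t).indicator f s * k t ∂μ ∂μ := by
        refine lintegral_lintegral_swap (Measurable.aemeasurable ?_)
        change Measurable fun p : ℝ × ℝ => (Iic p.1).indicator f p.2 * k p.1
        simp only [indicator_apply, mem_Iic, ite_mul, zero_mul]
        exact Measurable.ite (measurableSet_le measurable_snd measurable_fst) (by fun_prop)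
          measurable_const
    _ = ∫⁻ s in Ioi a, f s * ∫⁻ t in Ici s, k t ∂μ ∂μ := by
        refine setLIntegral_congr_fun measurableSet_Ioi fun s (hs : a < s) => ?_
        have hswap : ∀ t, (Iic t).indicator f s * k t = (Ici s).indicator (f s * k ·) t := by
          intro t
          by_cases hst : s ≤ t <;> simp [hst]
        simp_rw [hswap]
        rw [lintegral_indicator measurableSet_Ici, Measure.restrict_restrict measurableSet_Ici,
          inter_eq_left.2 (Ici_subset_Ioi.2 hs), lintegral_const_mul _ hk]

theorem lintegral_Ioi_lintegral_Ioc_zero_mul_inv_rpow {f : ℝ → ℝ≥0∞} (hf : Measurable f)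
    {d r : ℝ} (hd : 0 < d) (hr : 0 < r) :
    ∫⁻ t in Ioi r, (∫⁻ s in Ioc 0 t, f s) * ENNReal.ofReal (t ^ (d + 1))⁻¹ =
      (∫⁻ s in Ioc 0 r, f s) * ENNReal.ofReal (d * r ^ d)⁻¹ +
        ∫⁻ s in Ioi r, f s * ENNReal.ofReal (d * s ^ d)⁻¹ := by
  have hk : Measurable fun t : ℝ => ENNReal.ofReal (t ^ (d + 1))⁻¹ := by fun_prop
  have hsplit : EqOn (fun t => (∫⁻ s in Ioc 0 t, f s) * ENNReal.ofReal (t ^ (d + 1))⁻¹)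
      (fun t => (∫⁻ s in Ioc 0 r, f s) * ENNReal.ofReal (t ^ (d + 1))⁻¹ +
        (∫⁻ s in Ioc r t, f s) * ENNReal.ofReal (t ^ (d + 1))⁻¹) (Ioi r) := fun t ht => by
    dsimp only
    rw [← add_mul, ← lintegral_union measurableSet_Ioc (Ioc_disjoint_Ioc_of_le le_rfl),
      Ioc_union_Ioc_eq_Ioc hr.le (le_of_lt ht)]
  rw [setLIntegral_congr_fun measurableSet_Ioi hsplit, lintegral_add_left (hk.const_mul _),
    lintegral_const_mul _ hk, lintegral_Ioi_inv_rpow hd hr,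
    lintegral_Ioi_lintegral_Ioc_mul hf hk]
  congr 1
  refine setLIntegral_congr_fun measurableSet_Ioi fun s (hs : r < s) => ?_
  rw [setLIntegral_congr Ioi_ae_eq_Ici.symm, lintegral_Ioi_inv_rpow hd (hr.trans hs)]

section Dini

variable {θ : ℝ → ℝ} {d : ℝ}
  (hJ : IntegrableOn (fun t => θ t / t) (Ioc 0 1))
  (hL : IntegrableOn (fun s => θ s / s ^ (d + 1)) (Ioi 1))
include hJ hL

theorem integrableOn_Ioc_zero_div_self (t : ℝ) : IntegrableOn (fun s => θ s / s) (Ioc 0 t) := by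
  have h : IntegrableOn (fun s => θ s / s ^ (1 : ℝ)) (Ioc 1 t) :=
    (hL.mono_set Ioc_subset_Ioi_self).div_rpow_of_div_rpow one_pos measurableSet_Ioc
      Ioc_subset_Icc_self
  simp only [Real.rpow_one] at h
  exact (hJ.union h).mono_set Ioc_subset_Ioc_union_Ioc

theorem integrableOn_Ioi_div_rpow {r : ℝ} (hr : 0 < r) :
    IntegrableOn (fun s => θ s / s ^ (d + 1)) (Ioi r) := by
  have h : IntegrableOn (fun s => θ s / s ^ (1 : ℝ)) (Ioc r 1) := by
    simpa only [Real.rpow_one] using hJ.mono_set (Ioc_subset_Ioc_left hr.le)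
  exact ((h.div_rpow_of_div_rpow hr measurableSet_Ioc Ioc_subset_Icc_self).union hL).mono_set
    Ioi_subset_Ioc_union_Ioi

end Dini

theorem integral_Ioi_integral_Ioc_zero_div_rpow {θ : ℝ → ℝ} (hmeas : Measurable θ)
    (hnn : ∀ t : ℝ, 0 < t → 0 ≤ θ t) {d r : ℝ} (hd : 0 < d) (hr : 0 < r)
    (hF : ∀ t, IntegrableOn (fun s => θ s / s) (Ioc 0 t))
    (hG : IntegrableOn (fun s => θ s / s ^ (d + 1)) (Ioi r)) :
    ∫ t in Ioi r, (∫ s in Ioc 0 t, θ s / s) / t ^ (d + 1) =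
      (∫ s in Ioc 0 r, θ s / s) / (d * r ^ d) + (∫ t in Ioi r, θ t / t ^ (d + 1)) / d := by
  set F := fun t => ∫ s in Ioc 0 t, θ s / s
  have hθ_nonneg : ∀ t, 0 ≤ᵐ[volume.restrict (Ioc 0 t)] fun s => θ s / s := fun t =>
    ae_restrict_of_forall_mem measurableSet_Ioc fun s hs => div_nonneg (hnn s hs.1) hs.1.le
  have hG_nonneg : 0 ≤ᵐ[volume.restrict (Ioi r)] fun s => θ s / s ^ (d + 1) :=
    ae_restrict_of_forall_mem measurableSet_Ioi fun s (hs : r < s) =>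
      div_nonneg (hnn s (hr.trans hs)) (Real.rpow_nonneg (hr.trans hs).le _)
  have hF_nonneg : ∀ t, 0 ≤ F t := fun t => integral_nonneg_of_ae (hθ_nonneg t)
  have hF_lintegral : ∀ t, ENNReal.ofReal (F t) = ∫⁻ s in Ioc 0 t, ENNReal.ofReal (θ s / s) :=
    fun t => ofReal_integral_eq_lintegral_ofReal (hF t) (hθ_nonneg t)
  have hF_mono : Monotone F := fun a b hab =>
    setIntegral_mono_set (hF b) (hθ_nonneg b) (Ioc_subset_Ioc_right hab).eventuallyLE
  have hG_lintegral : ∫⁻ s in Ioi r, ENNReal.ofReal (θ s / s) * ENNReal.ofReal (d * s ^ d)⁻¹ =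
      ENNReal.ofReal d⁻¹ * ENNReal.ofReal (∫ t in Ioi r, θ t / t ^ (d + 1)) := by
    rw [ofReal_integral_eq_lintegral_ofReal hG hG_nonneg,
      ← lintegral_const_mul' _ _ ENNReal.ofReal_ne_top]
    refine setLIntegral_congr_fun measurableSet_Ioi fun s (hs : r < s) => ?_
    have hs0 := hr.trans hs
    rw [← ENNReal.ofReal_mul (div_nonneg (hnn s hs0) hs0.le),
      ← ENNReal.ofReal_mul (inv_nonneg.2 hd.le), Real.rpow_add_one hs0.ne']
    congr 1
    field_simp
  rw [integral_eq_lintegral_of_nonneg_ae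
      (ae_restrict_of_forall_mem measurableSet_Ioi fun t (ht : r < t) =>
        div_nonneg (hF_nonneg t) (Real.rpow_nonneg (hr.trans ht).le _))
      ((hF_mono.measurable.div (measurable_id.pow_const _)).aestronglyMeasurable),
    setLIntegral_congr_fun measurableSet_Ioi fun t _ => by
      rw [div_eq_mul_inv, ENNReal.ofReal_mul (hF_nonneg t), hF_lintegral],
    lintegral_Ioi_lintegral_Ioc_zero_mul_inv_rpow (by fun_prop) hd hr, ← hF_lintegral,
    hG_lintegral, ENNReal.toReal_add (by finiteness) (by finiteness), ENNReal.toReal_mul,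
    ENNReal.toReal_mul, ENNReal.toReal_ofReal (hF_nonneg r), ENNReal.toReal_ofReal (by positivity),
    ENNReal.toReal_ofReal (inv_nonneg.2 hd.le),
    ENNReal.toReal_ofReal (integral_nonneg_of_ae hG_nonneg)]
  ring

/-- 𝔏^d_{𝔍_θ}(r) = (1/d)(𝔍_θ(r) + 𝔏^d_θ(r)). -/
theorem large_scale_dini_of_dini (θ : ℝ → ℝ) (hmeas : Measurable θ)
    (hnn : ∀ t : ℝ, 0 < t → 0 ≤ θ t) (d : ℝ) (hd : 0 < d)
    (hJ : IntegrableOn (fun t => θ t / t) (Ioc (0 : ℝ) 1))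
    (hL : IntegrableOn (fun s => θ s / s ^ (d + 1)) (Ioi (1 : ℝ))) :
    ∀ r : ℝ, 0 < r →
      r ^ d * ∫ t in Ioi r, (∫ s in Ioc (0 : ℝ) t, θ s / s) / t ^ (d + 1) =
        (1 / d) * ((∫ t in Ioc (0 : ℝ) r, θ t / t) +
          r ^ d * ∫ t in Ioi r, θ t / t ^ (d + 1)) := by
  intro r hr
  rw [integral_Ioi_integral_Ioc_zero_div_rpow hmeas hnn hd hr
    (integrableOn_Ioc_zero_div_self hJ hL) (integrableOn_Ioi_div_rpow hJ hL hr)]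
  have hrd : r ^ d ≠ 0 := (Real.rpow_pos_of_pos hr d).ne'
  field_simp
end

section
/- Let w : (0,1] → (0,∞) be continuous with 𝔍_w(1) = ∫_0^1 w(t)/t dt < ∞, and suppose M := limsup_{s→0⁺} 𝔍_w(s)/w(s) < ∞, where 𝔍_w(s) = ∫_0^s w(t)/t dt. Then there exists s₀ ∈ (0,1) such that for every γ ∈ (0, 1/(2M)) and every s ∈ (0, s₀), one has 𝔍_w(s) ≤ (s₀^{-γ} 𝔍_w(s₀)) · s^γ. In particular w(s) ≲ s^γ for small s (since w(s) ≤ κ 𝔍_w(s) when w is κ-doubling). -/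
open MeasureTheory Set Filter Topology

/-- If limsup_{s→0⁺} 𝔍_w(s)/w(s) ≤ M < ∞, then 𝔍_w has sub-Hölder growth of order γ
for every γ ∈ (0, 1/(2M)) on a small interval (0, s₀). -/
theorem dini_holder_growth (w : ℝ → ℝ)
    (hw_pos : ∀ t ∈ Ioc (0 : ℝ) 1, 0 < w t)
    (hw_cont : ContinuousOn w (Ioc (0 : ℝ) 1))
    (hw_int : IntegrableOn (fun t => w t / t) (Ioc (0 : ℝ) 1))
    (M : ℝ) (hM_pos : 0 < M)
    (hM : Filter.limsup
        (fun s : ℝ => (((∫ t in Ioc (0 : ℝ) s, w t / t) / w s : ℝ) : EReal))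
        (nhdsWithin 0 (Ioi 0)) ≤ (M : EReal)) :
    ∃ s₀ ∈ Ioo (0 : ℝ) 1, ∀ γ ∈ Ioo (0 : ℝ) (1 / (2 * M)), ∀ s ∈ Ioo (0 : ℝ) s₀,
      ∫ t in Ioc (0 : ℝ) s, w t / t ≤
        (s₀ ^ (-γ) * ∫ t in Ioc (0 : ℝ) s₀, w t / t) * s ^ γ := by
  set g : ℝ → ℝ := fun t => w t / t with hg_def
  set J : ℝ → ℝ := fun s => ∫ t in Ioc (0 : ℝ) s, g t with hJ_def
  -- continuity of g on Ioc 0 1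
  have hg_cont : ContinuousOn g (Ioc (0 : ℝ) 1) := by
    apply hw_cont.div continuousOn_id
    intro t ht; exact ne_of_gt ht.1
  -- eventual bound from limsup
  have hlt : Filter.limsup
      (fun s : ℝ => (((∫ t in Ioc (0 : ℝ) s, w t / t) / w s : ℝ) : EReal))
      (nhdsWithin 0 (Ioi 0)) < ((2 * M : ℝ) : EReal) := by
    refine lt_of_le_of_lt hM ?_
    exact_mod_cast (by linarith : M < 2 * M)
  have hev : ∀ᶠ s in nhdsWithin (0:ℝ) (Ioi 0),
      (((∫ t in Ioc (0 : ℝ) s, w t / t) / w s : ℝ) : EReal) < ((2 * M : ℝ) : EReal) :=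
    Filter.eventually_lt_of_limsup_lt hlt
  have hev' : ∀ᶠ s in nhdsWithin (0:ℝ) (Ioi 0), J s / w s < 2 * M := by
    filter_upwards [hev] with s hs
    exact_mod_cast hs
  obtain ⟨u, hu_mem, hu⟩ := (mem_nhdsGT_iff_exists_Ioo_subset).1 hev'
  have hu_pos : 0 < u := hu_mem
  set s₀ : ℝ := min (u / 2) (1 / 2) with hs₀_def
  have hs₀_pos : 0 < s₀ := lt_min (by linarith) (by norm_num)
  have hs₀_lt_u : s₀ < u := lt_of_le_of_lt (min_le_left _ _) (by linarith)
  have hs₀_lt_one : s₀ < 1 := lt_of_le_of_lt (min_le_right _ _) (by norm_num)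
  -- key bound: J s ≤ 2 M w s on Ioc 0 s₀
  have key : ∀ s ∈ Ioc (0:ℝ) s₀, J s ≤ 2 * M * w s := by
    intro s hs
    have hsu : s ∈ Ioo (0:ℝ) u := ⟨hs.1, lt_of_le_of_lt hs.2 hs₀_lt_u⟩
    have := hu hsu
    have hws : 0 < w s := hw_pos s ⟨hs.1, le_of_lt (lt_of_le_of_lt hs.2 hs₀_lt_one)⟩
    have : J s / w s < 2 * M := this
    calc J s = (J s / w s) * w s := by field_simp
    _ ≤ (2 * M) * w s := by nlinarith
  -- integrability
  have hII : ∀ a b : ℝ, 0 ≤ a → 0 ≤ b → a ≤ 1 → b ≤ 1 → IntervalIntegrable g volume a b := by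
    intro a b ha hb ha1 hb1
    rw [intervalIntegrable_iff]
    apply hw_int.mono_set
    intro t ht
    rcases le_total a b with h | h
    · rw [uIoc_of_le h] at ht
      exact ⟨lt_of_le_of_lt ha ht.1, le_trans ht.2 hb1⟩
    · rw [uIoc_of_ge h] at ht
      exact ⟨lt_of_le_of_lt hb ht.1, le_trans ht.2 ha1⟩
  -- J s = ∫ 0..s g for 0 ≤ s
  have hJ_eq : ∀ s : ℝ, 0 ≤ s → J s = ∫ t in (0:ℝ)..s, g t := by
    intro s hs
    rw [intervalIntegral.integral_of_le hs]
  -- derivative of J on Ioo 0 1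
  have hJ_deriv : ∀ x ∈ Ioo (0:ℝ) 1, HasDerivAt J (g x) x := by
    intro x hx
    have hmeas : StronglyMeasurableAtFilter g (𝓝 x) volume := by
      refine (hg_cont.mono Ioo_subset_Ioc_self).stronglyMeasurableAtFilter isOpen_Ioo x hx
    have hcont : ContinuousAt g x :=
      (hg_cont x ⟨hx.1, hx.2.le⟩).continuousAt (Ioc_mem_nhds hx.1 hx.2)
    have hprim : HasDerivAt (fun s => ∫ t in (0:ℝ)..s, g t) (g x) x :=
      intervalIntegral.integral_hasDerivAt_right (hII 0 x le_rfl hx.1.le zero_le_one hx.2.le) hmeas hcont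
    apply hprim.congr_of_eventuallyEq
    filter_upwards [IsOpen.mem_nhds isOpen_Ioi hx.1] with s hs
    exact hJ_eq s (le_of_lt hs)
  refine ⟨s₀, ⟨hs₀_pos, hs₀_lt_one⟩, ?_⟩
  intro γ hγ s hs
  have h2M : 0 < 2 * M := by linarith
  have hγ_pos : 0 < γ := hγ.1
  have hγ2M : γ * (2 * M) < 1 := by
    have := hγ.2
    rw [lt_div_iff₀ h2M] at this
    linarith
  -- F monotone on Ioc 0 s₀
  set F : ℝ → ℝ := fun t => t ^ (-γ) * J t with hF_def
  have hF_deriv : ∀ x ∈ Ioc (0:ℝ) s₀, HasDerivAt F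
      ((-γ * x ^ (-γ - 1)) * J x + x ^ (-γ) * g x) x := by
    intro x hx
    have hx1 : x ∈ Ioo (0:ℝ) 1 := ⟨hx.1, lt_of_le_of_lt hx.2 hs₀_lt_one⟩
    have h1 : HasDerivAt (fun t : ℝ => t ^ (-γ)) (-γ * x ^ (-γ - 1)) x :=
      Real.hasDerivAt_rpow_const (Or.inl (ne_of_gt hx.1))
    exact h1.mul (hJ_deriv x hx1)
  have hF_deriv_nonneg : ∀ x ∈ Ioo (0:ℝ) s₀,
      0 ≤ (-γ * x ^ (-γ - 1)) * J x + x ^ (-γ) * g x := by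
    intro x hx
    have hxpos : 0 < x := hx.1
    have hx1 : x ∈ Ioc (0:ℝ) 1 := ⟨hxpos, le_of_lt (lt_trans hx.2 hs₀_lt_one)⟩
    have hws : 0 < w x := hw_pos x hx1
    have hJx : J x ≤ 2 * M * w x := key x ⟨hxpos, hx.2.le⟩
    have hr : x ^ (-γ) * g x = x ^ (-γ - 1) * w x := by
      have : x ^ (-γ - 1) = x ^ (-γ) / x := by
        rw [Real.rpow_sub hxpos, Real.rpow_one]
      rw [this, hg_def]
      field_simp
    rw [hr]
    have hrp : 0 < x ^ (-γ - 1) := Real.rpow_pos_of_pos hxpos _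
    have hwγ : γ * J x ≤ w x := by nlinarith
    nlinarith
  have hF_mono : MonotoneOn F (Ioc (0:ℝ) s₀) := by
    apply monotoneOn_of_deriv_nonneg (convex_Ioc 0 s₀)
    · intro x hx
      exact ((hF_deriv x hx).continuousAt).continuousWithinAt
    · rw [interior_Ioc]
      intro x hx
      exact ((hF_deriv x (Ioo_subset_Ioc_self hx)).differentiableAt).differentiableWithinAt
    · rw [interior_Ioc]
      intro x hx
      rw [(hF_deriv x (Ioo_subset_Ioc_self hx)).deriv]
      exact hF_deriv_nonneg x hx
  have hFs : F s ≤ F s₀ :=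
    hF_mono ⟨hs.1, hs.2.le⟩ ⟨hs₀_pos, le_rfl⟩ hs.2.le
  have hspos : 0 < s := hs.1
  have hsγ : 0 < s ^ γ := Real.rpow_pos_of_pos hspos γ
  have hcancel : s ^ (-γ) * s ^ γ = 1 := by
    rw [← Real.rpow_add hspos]
    simp
  have : s ^ (-γ) * J s * s ^ γ ≤ s₀ ^ (-γ) * J s₀ * s ^ γ := by
    exact mul_le_mul_of_nonneg_right hFs hsγ.le
  calc J s = s ^ (-γ) * J s * s ^ γ := by
        rw [mul_comm (s ^ (-γ)) (J s), mul_assoc, hcancel, mul_one]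
  _ ≤ s₀ ^ (-γ) * J s₀ * s ^ γ := this
  _ = (s₀ ^ (-γ) * J s₀) * s ^ γ := by ring
end
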